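/- arXiv:2410.11353 — 2 statements merged into one kernel-verified Lean document; each statement's English description precedes it below -/
import Mathlib

section
/- Let p ≥ 3 be a prime. Write the p-th division polynomial ψ_{p,s,t}(x) = Σ_{k=0}^{h} A_k x^{h−k} with A_k ∈ ℤ[s,t] and h = (p²−1)/2. Then p does not divide the constant-in-x coefficient A_h. -/
open WeierstrassCurve Polynomial

/-- The Weierstrass curve `y² = x³ + sx + t` over the polynomial ring `R[s,t]`, where
`s = X 0` and `t = X 1` in `MvPolynomial (Fin 2) R`. -/
noncomputable def Wst (R : Type*) [CommRing R] : WeierstrassCurve (MvPolynomial (Fin 2) R) :=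
  { a₁ := 0, a₂ := 0, a₃ := 0, a₄ := MvPolynomial.X 0, a₆ := MvPolynomial.X 1 }

section Aux

variable {K : Type*} [Field K]

/-- Closed-form candidate for the scalar EDS obtained by evaluating the division
polynomials of `y² = (x-1)²(x+2)` at `x = 0`, where `μ` is a `4`-division point parameter. -/
noncomputable def auxV (μ : K) (n : ℕ) : K :=
  μ ^ (if Even n then 2 else 1) * (μ ^ (2 * n) - 1) /
    (μ ^ n * ((μ ^ 2 - 1) * (if Even n then μ ^ 2 + 1 else 1)))

lemma auxV_even {μ : K} {n : ℕ} (h : Even n) :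
    auxV μ n = μ ^ 2 * (μ ^ (2 * n) - 1) / (μ ^ n * ((μ ^ 2 - 1) * (μ ^ 2 + 1))) := by
  rw [auxV, if_pos h, if_pos h]

lemma auxV_odd {μ : K} {n : ℕ} (h : ¬ Even n) :
    auxV μ n = μ * (μ ^ (2 * n) - 1) / (μ ^ n * (μ ^ 2 - 1)) := by
  rw [auxV, if_neg h, if_neg h, pow_one, mul_one]

lemma preNormEDS'_eq_auxV {μ : K} (hμ0 : μ ≠ 0) (hq : μ ^ 4 + 10 * μ ^ 2 + 1 = 0)
    (hδ1 : μ ^ 2 - 1 ≠ 0) (hs1 : μ ^ 2 + 1 ≠ 0) (n : ℕ) :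
    preNormEDS' (64 : K) (-9) (-10) n = auxV μ n := by
  induction n using normEDSRec with
  | zero => simp [auxV]
  | one =>
      rw [preNormEDS'_one, auxV_odd (by decide)]
      rw [eq_div_iff (by repeat' first | exact hδ1 | exact hs1 | exact hμ0 | exact hM0 | apply mul_ne_zero | apply pow_ne_zero)]
      ring
  | two =>
      rw [preNormEDS'_two, auxV_even (by decide)]
      rw [eq_div_iff (by repeat' first | exact hδ1 | exact hs1 | exact hμ0 | exact hM0 | apply mul_ne_zero | apply pow_ne_zero)]
      ring
  | three =>
      rw [preNormEDS'_three, auxV_odd (by decide)]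
      rw [eq_div_iff (by repeat' first | exact hδ1 | exact hs1 | exact hμ0 | exact hM0 | apply mul_ne_zero | apply pow_ne_zero)]
      linear_combination (-μ ^ 3 + μ) * hq
  | four =>
      rw [preNormEDS'_four, auxV_even (by decide)]
      rw [eq_div_iff (by repeat' first | exact hδ1 | exact hs1 | exact hμ0 | exact hM0 | apply mul_ne_zero | apply pow_ne_zero)]
      linear_combination (-μ ^ 6 + μ ^ 2) * hq
  | even m ih1 ih2 ih3 ih4 ih5 =>
      rw [preNormEDS'_even, ih1, ih2, ih3, ih4, ih5]
      have h2m : Even (2 * (m + 3)) := even_two_mul _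
      rcases Nat.even_or_odd m with hm | hm
      · rw [auxV_even h2m, auxV_even (by simp [Nat.even_iff, Nat.even_iff.mp hm]),
          auxV_odd (by simp [Nat.even_iff, Nat.even_iff.mp hm, Nat.add_mod]),
          auxV_odd (by simp [Nat.even_iff, Nat.even_iff.mp hm, Nat.add_mod]),
          auxV_odd (by simp [Nat.even_iff, Nat.even_iff.mp hm, Nat.add_mod]),
          auxV_even (by simp [Nat.even_iff, Nat.even_iff.mp hm, Nat.add_mod])]
        rw [show 2 * (2 * (m + 3)) = m + (m + (m + (m + 12))) by ring,
          show 2 * (m + 3) = m + (m + 6) by ring,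
          show 2 * (m + 1) = m + (m + 2) by ring, show 2 * (m + 2) = m + (m + 4) by ring,
          show 2 * (m + 4) = m + (m + 8) by ring, show 2 * (m + 5) = m + (m + 10) by ring]
        simp only [pow_add]
        have hM0 : μ ^ m ≠ 0 := pow_ne_zero m hμ0
        simp only [div_pow, div_mul_div_comm]
        rw [div_sub_div _ _ (by repeat' first | exact hδ1 | exact hs1 | exact hμ0 | exact hM0 | apply mul_ne_zero | apply pow_ne_zero)
            (by repeat' first | exact hδ1 | exact hs1 | exact hμ0 | exact hM0 | apply mul_ne_zero | apply pow_ne_zero),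
          div_eq_div_iff (by repeat' first | exact hδ1 | exact hs1 | exact hμ0 | exact hM0 | apply mul_ne_zero | apply pow_ne_zero)
            (by repeat' first | exact hδ1 | exact hs1 | exact hμ0 | exact hM0 | apply mul_ne_zero | apply pow_ne_zero)]
        ring
      · rw [auxV_even h2m, auxV_odd (by simp [Nat.even_iff, Nat.odd_iff.mp hm, Nat.add_mod]),
          auxV_even (by simp [Nat.even_iff, Nat.odd_iff.mp hm, Nat.add_mod]),
          auxV_even (by simp [Nat.even_iff, Nat.odd_iff.mp hm, Nat.add_mod]),
          auxV_even (by simp [Nat.even_iff, Nat.odd_iff.mp hm, Nat.add_mod]),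
          auxV_odd (by simp [Nat.even_iff, Nat.odd_iff.mp hm, Nat.add_mod])]
        rw [show 2 * (2 * (m + 3)) = m + (m + (m + (m + 12))) by ring,
          show 2 * (m + 3) = m + (m + 6) by ring,
          show 2 * (m + 1) = m + (m + 2) by ring, show 2 * (m + 2) = m + (m + 4) by ring,
          show 2 * (m + 4) = m + (m + 8) by ring, show 2 * (m + 5) = m + (m + 10) by ring]
        simp only [pow_add]
        have hM0 : μ ^ m ≠ 0 := pow_ne_zero m hμ0
        simp only [div_pow, div_mul_div_comm]
        rw [div_sub_div _ _ (by repeat' first | exact hδ1 | exact hs1 | exact hμ0 | exact hM0 | apply mul_ne_zero | apply pow_ne_zero)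
            (by repeat' first | exact hδ1 | exact hs1 | exact hμ0 | exact hM0 | apply mul_ne_zero | apply pow_ne_zero),
          div_eq_div_iff (by repeat' first | exact hδ1 | exact hs1 | exact hμ0 | exact hM0 | apply mul_ne_zero | apply pow_ne_zero)
            (by repeat' first | exact hδ1 | exact hs1 | exact hμ0 | exact hM0 | apply mul_ne_zero | apply pow_ne_zero)]
        ring
  | odd m ih1 ih2 ih3 ih4 =>
      rw [preNormEDS'_odd, ih1, ih2, ih3, ih4]
      have h64 : (64 : K) = (μ ^ 2 + 1) ^ 4 / μ ^ 4 := by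
        rw [eq_div_iff (by exact pow_ne_zero _ hμ0)]
        linear_combination (-μ ^ 4 + 6 * μ ^ 2 - 1) * hq
      have hoddn : ¬ Even (2 * (m + 2) + 1) := by simp [Nat.even_iff, Nat.add_mod, Nat.mul_mod]
      rcases Nat.even_or_odd m with hm | hm
      · rw [if_pos hm, if_pos hm, auxV_odd hoddn,
          auxV_even (by simp [Nat.even_iff, Nat.even_iff.mp hm, Nat.add_mod]),
          auxV_even (by simp [Nat.even_iff, Nat.even_iff.mp hm, Nat.add_mod]),
          auxV_odd (by simp [Nat.even_iff, Nat.even_iff.mp hm, Nat.add_mod]),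
          auxV_odd (by simp [Nat.even_iff, Nat.even_iff.mp hm, Nat.add_mod]), h64]
        rw [show 2 * (2 * (m + 2) + 1) = m + (m + (m + (m + 10))) by ring,
          show 2 * (m + 2) + 1 = m + (m + 5) by ring,
          show 2 * (m + 1) = m + (m + 2) by ring, show 2 * (m + 2) = m + (m + 4) by ring,
          show 2 * (m + 3) = m + (m + 6) by ring, show 2 * (m + 4) = m + (m + 8) by ring]
        simp only [pow_add]
        have hM0 : μ ^ m ≠ 0 := pow_ne_zero m hμ0
        simp only [one_mul, mul_one, div_pow, div_mul_div_comm]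
        rw [div_sub_div _ _ (by repeat' first | exact hδ1 | exact hs1 | exact hμ0 | exact hM0 | apply mul_ne_zero | apply pow_ne_zero)
            (by repeat' first | exact hδ1 | exact hs1 | exact hμ0 | exact hM0 | apply mul_ne_zero | apply pow_ne_zero),
          div_eq_div_iff (by repeat' first | exact hδ1 | exact hs1 | exact hμ0 | exact hM0 | apply mul_ne_zero | apply pow_ne_zero)
            (by repeat' first | exact hδ1 | exact hs1 | exact hμ0 | exact hM0 | apply mul_ne_zero | apply pow_ne_zero)]
        ring
      · rw [if_neg (by simpa using Nat.not_even_iff_odd.mpr hm),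
          if_neg (by simpa using Nat.not_even_iff_odd.mpr hm), auxV_odd hoddn,
          auxV_odd (by simp [Nat.even_iff, Nat.odd_iff.mp hm, Nat.add_mod]),
          auxV_odd (by simp [Nat.even_iff, Nat.odd_iff.mp hm, Nat.add_mod]),
          auxV_even (by simp [Nat.even_iff, Nat.odd_iff.mp hm, Nat.add_mod]),
          auxV_even (by simp [Nat.even_iff, Nat.odd_iff.mp hm, Nat.add_mod]), h64]
        rw [show 2 * (2 * (m + 2) + 1) = m + (m + (m + (m + 10))) by ring,
          show 2 * (m + 2) + 1 = m + (m + 5) by ring,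
          show 2 * (m + 1) = m + (m + 2) by ring, show 2 * (m + 2) = m + (m + 4) by ring,
          show 2 * (m + 3) = m + (m + 6) by ring, show 2 * (m + 4) = m + (m + 8) by ring]
        simp only [pow_add]
        have hM0 : μ ^ m ≠ 0 := pow_ne_zero m hμ0
        simp only [one_mul, mul_one, div_pow, div_mul_div_comm]
        rw [div_sub_div _ _ (by repeat' first | exact hδ1 | exact hs1 | exact hμ0 | exact hM0 | apply mul_ne_zero | apply pow_ne_zero)
            (by repeat' first | exact hδ1 | exact hs1 | exact hμ0 | exact hM0 | apply mul_ne_zero | apply pow_ne_zero),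
          div_eq_div_iff (by repeat' first | exact hδ1 | exact hs1 | exact hμ0 | exact hM0 | apply mul_ne_zero | apply pow_ne_zero)
            (by repeat' first | exact hδ1 | exact hs1 | exact hμ0 | exact hM0 | apply mul_ne_zero | apply pow_ne_zero)]
        ring

end Aux

lemma preNormEDS'_p_ne_zero {K : Type*} [Field K] [IsAlgClosed K] (p : ℕ) [hpf : Fact p.Prime]
    [CharP K p] (hodd : Odd p) (hp5 : 5 ≤ p) :
    preNormEDS' (64 : K) (-9) (-10) p ≠ 0 := by
  have hp := hpf.out
  have h8 : (8 : K) ≠ 0 := by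
    intro h
    have hd := (CharP.cast_eq_zero_iff K p 8).mp h
    have h1 := Nat.le_of_dvd (by norm_num) hd
    have h2 := Nat.odd_iff.mp hodd
    interval_cases p <;> omega
  have h12 : (12 : K) ≠ 0 := by
    intro h
    have hd := (CharP.cast_eq_zero_iff K p 12).mp h
    have h1 := Nat.le_of_dvd (by norm_num) hd
    have h2 := Nat.odd_iff.mp hodd
    interval_cases p <;> omega
  obtain ⟨μ, hμroot⟩ := IsAlgClosed.exists_root (X ^ 4 + C 10 * X ^ 2 + 1 : K[X]) (by
    have h4 : (X ^ 4 + C 10 * X ^ 2 + 1 : K[X]).degree = 4 := by compute_degree!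
    rw [h4]
    decide)
  have hq : μ ^ 4 + 10 * μ ^ 2 + 1 = 0 := by
    have := hμroot
    simpa [IsRoot] using this
  have hμ0 : μ ≠ 0 := by
    intro h
    rw [h] at hq
    norm_num at hq
  have hδ1 : μ ^ 2 - 1 ≠ 0 := by
    intro h
    have h1 : μ ^ 2 = 1 := by linear_combination h
    apply h12
    linear_combination hq - (μ ^ 2 + 11) * h1
  have hs1 : μ ^ 2 + 1 ≠ 0 := by
    intro h
    have h1 : μ ^ 2 = -1 := by linear_combination h
    apply h8
    linear_combination -hq + (μ ^ 2 + 9) * h1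
  rw [preNormEDS'_eq_auxV hμ0 hq hδ1 hs1 p, auxV_odd (Nat.not_even_iff_odd.mpr hodd)]
  have hfrob : (μ ^ 2 - 1) ^ p = μ ^ (2 * p) - 1 := by
    rw [sub_pow_char, one_pow, ← pow_mul]
  rw [← hfrob]
  exact div_ne_zero (mul_ne_zero hμ0 (pow_ne_zero _ hδ1))
    (mul_ne_zero (pow_ne_zero _ hμ0) hδ1)

/-- Writing the `p`-th division polynomial `ψ_{p,s,t}(x) = ∑_{k=0}^{h} A_k x^{h-k}` over
`ℤ[s,t]` with `h = (p²-1)/2`, the prime `p` does not divide the constant-in-`x`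
coefficient `A_h`. -/
theorem p_not_dvd_constant_coeff (p : ℕ) (hp : p.Prime) (hodd : Odd p) (hp3 : 3 ≤ p) :
    ¬ ((p : MvPolynomial (Fin 2) ℤ) ∣ ((Wst ℤ).preΨ (p : ℤ)).coeff 0) := by
  intro hdvd
  rcases eq_or_lt_of_le hp3 with h3 | h4
  · -- p = 3
    subst h3
    rw [show ((3 : ℕ) : ℤ) = 3 by norm_num, preΨ_three] at hdvd
    have hc : ((Wst ℤ).Ψ₃).coeff 0 = -(MvPolynomial.X 0) ^ 2 := by
      rw [Polynomial.coeff_zero_eq_eval_zero]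
      simp [WeierstrassCurve.Ψ₃, Wst, WeierstrassCurve.b₂, WeierstrassCurve.b₄,
        WeierstrassCurve.b₆, WeierstrassCurve.b₈]
    rw [hc] at hdvd
    obtain ⟨g, hg⟩ := hdvd
    have h30 : ((3 : ℕ) : MvPolynomial (Fin 2) ℤ) = MvPolynomial.C 3 := by
      simp
    rw [h30] at hg
    have := congrArg (MvPolynomial.coeff (Finsupp.single 0 2)) hg
    rw [MvPolynomial.coeff_C_mul] at this
    simp [MvPolynomial.coeff_X_pow] at this
    omega
  · -- p ≥ 5
    have hp5 : 5 ≤ p := by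
      rcases hodd with ⟨k, hk⟩
      omega
    haveI : Fact p.Prime := ⟨hp⟩
    set K := AlgebraicClosure (ZMod p) with hK
    let φ : MvPolynomial (Fin 2) ℤ →+* K :=
      MvPolynomial.eval₂Hom (Int.castRingHom K) ![(-3 : K), 2]
    let G : Polynomial (MvPolynomial (Fin 2) ℤ) →+* K := φ.comp Polynomial.constantCoeff
    have hcoeff : φ (((Wst ℤ).preΨ (p : ℤ)).coeff 0) = preNormEDS' (64 : K) (-9) (-10) p := by
      rw [preΨ_ofNat]
      show G (preNormEDS' ((Wst ℤ).Ψ₂Sq ^ 2) (Wst ℤ).Ψ₃ (Wst ℤ).preΨ₄ p) = _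
      rw [map_preNormEDS']
      congr 1
      · show φ (((Wst ℤ).Ψ₂Sq ^ 2).coeff 0) = 64
        rw [Polynomial.coeff_zero_eq_eval_zero]
        simp [WeierstrassCurve.Ψ₂Sq, Wst, WeierstrassCurve.b₂, WeierstrassCurve.b₄,
          WeierstrassCurve.b₆, φ]
        norm_num
      · show φ (((Wst ℤ).Ψ₃).coeff 0) = -9
        rw [Polynomial.coeff_zero_eq_eval_zero]
        simp [WeierstrassCurve.Ψ₃, Wst, WeierstrassCurve.b₂, WeierstrassCurve.b₄,
          WeierstrassCurve.b₆, WeierstrassCurve.b₈, φ]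
        norm_num
      · show φ (((Wst ℤ).preΨ₄).coeff 0) = -10
        rw [Polynomial.coeff_zero_eq_eval_zero]
        simp [WeierstrassCurve.preΨ₄, Wst, WeierstrassCurve.b₂, WeierstrassCurve.b₄,
          WeierstrassCurve.b₆, WeierstrassCurve.b₈, φ]
        norm_num
    obtain ⟨g, hg⟩ := hdvd
    have hzero : φ (((Wst ℤ).preΨ (p : ℤ)).coeff 0) = 0 := by
      rw [hg, map_mul]
      have : φ ((p : MvPolynomial (Fin 2) ℤ)) = (p : K) := by
        simp
      rw [this, CharP.cast_eq_zero K p, zero_mul]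
    rw [hcoeff] at hzero
    exact preNormEDS'_p_ne_zero p hodd hp5 hzero
end

section
/- With notation from the description of η_{s,t,x̃}: the coefficients c_{pi−1}, c_{p²−1} ∈ F_p[s,t] satisfy −(ψ_{p,s,t}(x) mod p)² = Σ_{i=1}^{p−1} c_{pi−1} x^{p²−pi} + c_{p²−1}; in particular c_{p²−1} = −a_{(p²−1)/2}², where a_{(p²−1)/2} is the constant-in-X coefficient of θ_{s,t}. -/
/-!
Since `p` is odd, `ψ_p² = preΨ_p² = θ(x^p)²`, so the coefficient of `x̃` in the `x^(pk)`-coefficient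
of `σ = η(x^p)` is `-(θ²)_k`. The degree bound `deg preΨ_p ≤ (p² - 1)/2` forces `deg θ² < p`, so
`-ψ_p² = -(θ²)(x^p)` is read off from these coefficients for `k = 0, …, p - 1`.
-/

open WeierstrassCurve Polynomial

/-- The polynomial `σ_{s,t,x̃}(x) = -(ψ_{p+1}ψ_{p-1})(x) + (x - x̃)·ψ_p²(x)` mod `p`, whose
zeros are the `x`-coordinates of points `S` with `x([p]S) = x̃`; an element of
`(F_p[s,t][x̃])[x]`, where the extra variable `x̃` is `Polynomial.X` of the coefficient ring. -/
noncomputable def sigmaP (p : ℕ) [Fact p.Prime] :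
    Polynomial (Polynomial (MvPolynomial (Fin 2) (ZMod p))) :=
  ((Wst (ZMod p)).Φ (p : ℤ)).map (Polynomial.C) -
    Polynomial.C (Polynomial.X) * ((Wst (ZMod p)).ΨSq (p : ℤ)).map (Polynomial.C)

open Finset

theorem Finset.sum_Icc_reflect_add_zero {M : Type*} [AddCommMonoid M] (g : ℕ → M) {m : ℕ}
    (hm : 0 < m) : ∑ i ∈ Icc 1 (m - 1), g (m - i) + g 0 = ∑ j ∈ range m, g j := by
  have hIcc : Icc 1 (m - 1) = Ico 1 m := by ext; simp only [mem_Icc, mem_Ico]; omega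
  rw [hIcc, sum_Ico_reflect g 1 (Nat.le_succ m), Nat.add_sub_cancel, Nat.add_sub_cancel_left,
    ← Nat.Ico_zero_eq_range, sum_eq_sum_Ico_succ_bot hm, add_comm]

namespace Polynomial

variable {R : Type*} [CommSemiring R]

theorem expand_eq_sum_Icc_reflect (p : ℕ) {f : R[X]} {m : ℕ} (hf : f.natDegree < m) :
    expand R p f =
      ∑ i ∈ Icc 1 (m - 1), C (f.coeff (m - i)) * X ^ (p * m - p * i) + C (f.coeff 0) := by
  calc expand R p f = ∑ j ∈ range m, C (f.coeff j) * X ^ (p * j) := by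
        conv_lhs => rw [f.as_sum_range_C_mul_X_pow' hf]
        simp [pow_mul]
    _ = _ := by
        rw [← sum_Icc_reflect_add_zero _ (by omega : 0 < m), mul_zero, pow_zero, mul_one]
        simp_rw [Nat.mul_sub]

theorem two_mul_natDegree_lt_of_natDegree_expand_le {p : ℕ} (hp : 0 < p) {f : R[X]}
    (hf : (expand R p f).natDegree ≤ (p ^ 2 - 1) / 2) : 2 * f.natDegree < p := by
  rw [natDegree_expand] at hf
  have hlt : 2 * f.natDegree * p < p * p := by
    have := Nat.div_mul_le_self (p ^ 2 - 1) 2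
    have : 0 < p ^ 2 := by positivity
    rw [mul_assoc, ← sq]
    omega
  exact Nat.lt_of_mul_lt_mul_right hlt

end Polynomial

theorem WeierstrassCurve.ΨSq_of_not_even {R : Type*} [CommRing R] (W : WeierstrassCurve R)
    {n : ℤ} (hn : ¬Even n) : W.ΨSq n = W.preΨ n ^ 2 := by
  rw [ΨSq, if_neg hn, mul_one]

theorem coeff_one_coeff_sigmaP (p : ℕ) [Fact p.Prime] (n : ℕ) :
    ((sigmaP p).coeff n).coeff 1 = -((Wst (ZMod p)).ΨSq p).coeff n := by
  simp [sigmaP, coeff_C]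

theorem eta_c_coeffs_general (p : ℕ) [Fact p.Prime] (hodd : Odd p)
    (η : Polynomial (Polynomial (MvPolynomial (Fin 2) (ZMod p))))
    (hη : η.comp (Polynomial.X ^ p) = sigmaP p)
    (θ : Polynomial (MvPolynomial (Fin 2) (ZMod p)))
    (hθ : θ.comp (Polynomial.X ^ p) = (Wst (ZMod p)).preΨ (p : ℤ)) :
    (-((Wst (ZMod p)).preΨ (p : ℤ)) ^ 2 =
      (∑ i ∈ Finset.Icc 1 (p - 1),
        Polynomial.C ((η.coeff (p - i)).coeff 1) * Polynomial.X ^ (p ^ 2 - p * i)) +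
        Polynomial.C ((η.coeff 0).coeff 1)) ∧
    (η.coeff 0).coeff 1 = -(θ.coeff 0) ^ 2 := by
  have hp : 0 < p := (Fact.out : p.Prime).pos
  have hp_not_even : ¬Even (p : ℤ) := by rw [Int.even_coe_nat, Nat.not_even_iff_odd]; exact hodd
  rw [← expand_eq_comp_X_pow] at hη hθ
  have hcoeff (k : ℕ) : (η.coeff k).coeff 1 = (-θ ^ 2).coeff k := by
    rw [← coeff_expand_mul' hp η k, hη, coeff_one_coeff_sigmaP, ΨSq_of_not_even _ hp_not_even, ← hθ,
      ← map_pow, coeff_expand_mul' hp, coeff_neg]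
  have hdeg : (-θ ^ 2).natDegree < p := by
    have hψdeg := (Wst (ZMod p)).natDegree_preΨ_le p
    rw [if_neg hp_not_even, Int.natAbs_natCast, ← hθ] at hψdeg
    have hθdeg := two_mul_natDegree_lt_of_natDegree_expand_le hp hψdeg
    rw [natDegree_neg]
    exact natDegree_pow_le.trans_lt hθdeg
  refine ⟨?_, ?_⟩
  · rw [← hθ, ← map_pow, ← map_neg, expand_eq_sum_Icc_reflect p hdeg, ← sq]
    simp_rw [hcoeff]
  · rw [hcoeff, coeff_neg, sq θ, mul_coeff_zero, sq]

/-- The `x̃`-linear parts `c_{pi-1}` of the coefficients of `η_{s,t,x̃}` satisfy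
`-(ψ_{p,s,t} mod p)² = ∑_{i=1}^{p-1} c_{pi-1} x^(p²-pi) + c_{p²-1}`; in particular
`c_{p²-1} = -a_{(p²-1)/2}²` where `a_{(p²-1)/2}` is the constant coefficient of `θ_{s,t}`. -/
theorem eta_c_coeffs (p : ℕ) [Fact p.Prime] (hodd : Odd p) (hp3 : 3 ≤ p)
    (η : Polynomial (Polynomial (MvPolynomial (Fin 2) (ZMod p))))
    (hη : η.comp (Polynomial.X ^ p) = sigmaP p)
    (θ : Polynomial (MvPolynomial (Fin 2) (ZMod p)))
    (hθ : θ.comp (Polynomial.X ^ p) = (Wst (ZMod p)).preΨ (p : ℤ)) :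
    (-((Wst (ZMod p)).preΨ (p : ℤ)) ^ 2 =
      (∑ i ∈ Finset.Icc 1 (p - 1),
        Polynomial.C ((η.coeff (p - i)).coeff 1) * Polynomial.X ^ (p ^ 2 - p * i)) +
        Polynomial.C ((η.coeff 0).coeff 1)) ∧
    (η.coeff 0).coeff 1 = -(θ.coeff 0) ^ 2 :=
  eta_c_coeffs_general p hodd η hη θ hθ
end
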